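/- For every constant c, there exists an edge-coloured graph G in which every colour class has at least Δ(G) + c edges but G has no full rainbow matching. (Hence the bound Δ(G)+2 in the conjectures of Aharoni, Berger, Chudnovsky, Howard and Seymour cannot be replaced by Δ(G) plus any constant.) -/

import Mathlib

abbrev DSV (m : ℕ) := Fin m × (Fin 2 ⊕ Fin 2 × Fin (m / 2))

def Gm (m : ℕ) : SimpleGraph (DSV m) :=
  SimpleGraph.fromRel (fun a b =>
    a.1 = b.1 ∧ ((a.2.isLeft ∧ b.2.isLeft) ∨
      ∃ j l, a.2 = Sum.inl j ∧ b.2 = Sum.inr (j, l)))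

def colm (m : ℕ) : Sym2 (DSV m) → Option (Fin m) :=
  Sym2.lift ⟨fun a b => if a.2.isLeft ∧ b.2.isLeft then none else some (min a.1 b.1),
    fun a b => by
      by_cases h : (a.2.isLeft : Prop) ∧ (b.2.isLeft : Prop) <;>
        simp [h, and_comm, min_comm]⟩

def IsMatching {V : Type*} (G : SimpleGraph V) (M : Set (Sym2 V)) : Prop :=
  M ⊆ G.edgeSet ∧ ∀ e ∈ M, ∀ f ∈ M, e ≠ f → ∀ v, v ∈ e → v ∉ f

def HasFullRainbowMatching {V C : Type*} (G : SimpleGraph V) (c : Sym2 V → C) : Prop :=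
  ∃ M : Set (Sym2 V), IsMatching G M ∧ ∀ k : C, ∃! e, e ∈ M ∧ c e = k

noncomputable instance {n : ℕ} (G : SimpleGraph (Fin n)) : DecidableRel G.Adj :=
  Classical.decRel _

/-!
In `Gm m` every vertex has at most one centre neighbour and, for each label `l`, at most one
leaf neighbour labelled `l`, so `Δ ≤ m / 2 + 1`, while every colour class has `m` edges.
A full rainbow matching would contain a blue edge, which is the central edge of some component
`i` and so covers both of its centres; but every edge of colour `i` contains one of these
centres. Taking `m = 2c + 2` gives the slack `c`.
-/

@[simp]
lemma colm_mk {m : ℕ} (a b : DSV m) :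
    colm m s(a, b) = if a.2.isLeft ∧ b.2.isLeft then none else some (min a.1 b.1) :=
  rfl

namespace Gm

variable {m : ℕ}

@[simp]
lemma adj_inl_inl {i i' : Fin m} {j j' : Fin 2} :
    (Gm m).Adj (i, .inl j) (i', .inl j') ↔ i = i' ∧ j ≠ j' := by
  simp only [Gm, SimpleGraph.fromRel_adj]; grind

@[simp]
lemma adj_inl_inr {i i' : Fin m} {j j' : Fin 2} {l : Fin (m / 2)} :
    (Gm m).Adj (i, .inl j) (i', .inr (j', l)) ↔ i = i' ∧ j = j' := by
  simp only [Gm, SimpleGraph.fromRel_adj]; grind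

@[simp]
lemma adj_inr_inl {i i' : Fin m} {j j' : Fin 2} {l : Fin (m / 2)} :
    (Gm m).Adj (i, .inr (j, l)) (i', .inl j') ↔ i = i' ∧ j = j' := by
  rw [SimpleGraph.adj_comm, adj_inl_inr, eq_comm, @eq_comm _ j']

@[simp]
lemma not_adj_inr_inr {i i' : Fin m} {p p' : Fin 2 × Fin (m / 2)} :
    ¬ (Gm m).Adj (i, .inr p) (i', .inr p') := by
  simp [Gm]

lemma degree_le [DecidableRel (Gm m).Adj] (v : DSV m) : (Gm m).degree v ≤ m / 2 + 1 := by
  let label : DSV m → Option (Fin (m / 2)) := fun w => w.2.getRight?.map Prod.snd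
  have hinj : Set.InjOn label ((Gm m).neighborFinset v) := by
    obtain ⟨i, j | ⟨j, l⟩⟩ := v <;>
    rintro ⟨i₁, j₁ | ⟨j₁, l₁⟩⟩ h₁ ⟨i₂, j₂ | ⟨j₂, l₂⟩⟩ h₂ heq <;>
    simp [label] at h₁ h₂ heq ⊢ <;> omega
  calc (Gm m).degree v ≤ Fintype.card (Option (Fin (m / 2))) :=
        Finset.card_le_card_of_injOn label (by simp) hinj
    _ = m / 2 + 1 := by simp

lemma maxDegree_le [DecidableRel (Gm m).Adj] : (Gm m).maxDegree ≤ m / 2 + 1 :=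
  (Gm m).maxDegree_le_of_forall_degree_le _ degree_le

lemma le_ncard_colorClass (k : Option (Fin m)) :
    2 * (m / 2) ≤ {e ∈ (Gm m).edgeSet | colm m e = k}.ncard := by
  cases k with
  | none =>
    calc 2 * (m / 2) ≤ (Set.univ : Set (Fin m)).ncard := by simp [Nat.mul_div_le]
      _ ≤ _ := Set.ncard_le_ncard_of_injOn (fun i => s((i, .inl 0), (i, .inl 1)))
          (by simp) (by intro i _ i' _ h; simpa using h) (Set.toFinite _)
  | some i =>
    calc 2 * (m / 2) = (Set.univ : Set (Fin 2 × Fin (m / 2))).ncard := by simp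
      _ ≤ _ := Set.ncard_le_ncard_of_injOn (fun p => s((i, .inl p.1), (i, .inr p)))
          (by simp) (by intro p _ p' _ h; exact (by simpa using h : _ ∧ _).2) (Set.toFinite _)

lemma centres_mem_of_colm_eq_none {e : Sym2 (DSV m)} (he : e ∈ (Gm m).edgeSet)
    (hc : colm m e = none) : ∃ i, ∀ j, (i, .inl j) ∈ e := by
  induction e using Sym2.ind with | _ a b => ?_
  obtain ⟨i, j | ⟨j, l⟩⟩ := a <;> obtain ⟨i', j' | ⟨j', l'⟩⟩ := b <;> simp at he hc
  obtain ⟨rfl, hj⟩ := he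
  refine ⟨i, fun k => ?_⟩
  simp only [Sym2.mem_iff, Prod.mk.injEq, Sum.inl.injEq, true_and]
  omega

lemma centre_mem_of_colm_eq_some {e : Sym2 (DSV m)} {i : Fin m} (he : e ∈ (Gm m).edgeSet)
    (hc : colm m e = some i) : ∃ j, (i, .inl j) ∈ e := by
  induction e using Sym2.ind with | _ a b => ?_
  obtain ⟨i₁, j₁ | ⟨j₁, l₁⟩⟩ := a <;> obtain ⟨i₂, j₂ | ⟨j₂, l₂⟩⟩ := b <;>
    simp at he hc
  all_goals
    obtain ⟨rfl, rfl⟩ := he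
    rw [min_self] at hc
    exact ⟨j₁, by simp [hc]⟩

lemma not_hasFullRainbowMatching : ¬ HasFullRainbowMatching (Gm m) (colm m) := by
  rintro ⟨M, ⟨hMG, hdisj⟩, hM⟩
  obtain ⟨e, ⟨heM, he⟩, -⟩ := hM none
  obtain ⟨i, hie⟩ := centres_mem_of_colm_eq_none (hMG heM) he
  obtain ⟨f, ⟨hfM, hf⟩, -⟩ := hM (some i)
  obtain ⟨j, hjf⟩ := centre_mem_of_colm_eq_some (hMG hfM) hf
  exact hdisj e heM f hfM (by rintro rfl; simp_all) _ (hie j) hjf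

end Gm

section Relabel

variable {V W C D : Type*} {G : SimpleGraph V} {G' : SimpleGraph W}

lemma HasFullRainbowMatching.of_iso (φ : G' ≃g G) (ψ : C ≃ D) {col : Sym2 V → C}
    (h : HasFullRainbowMatching G' (ψ ∘ col ∘ Sym2.map φ)) :
    HasFullRainbowMatching G col := by
  obtain ⟨M, ⟨hMG, hdisj⟩, hM⟩ := h
  refine ⟨Sym2.map φ '' M, ⟨?_, ?_⟩, fun k => ?_⟩
  · rintro _ ⟨e, he, rfl⟩
    exact φ.map_mem_edgeSet_iff.2 (hMG he)
  · rintro _ ⟨e, he, rfl⟩ _ ⟨f, hf, rfl⟩ hne v hve hvf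
    obtain ⟨a, ha, rfl⟩ := Sym2.mem_map.1 hve
    obtain ⟨b, hb, hab⟩ := Sym2.mem_map.1 hvf
    rw [φ.injective hab] at hb
    exact hdisj e he f hf (by rintro rfl; exact hne rfl) a ha hb
  · obtain ⟨e, ⟨he, hc⟩, huniq⟩ := hM (ψ k)
    refine ⟨Sym2.map φ e, ⟨⟨e, he, rfl⟩, ψ.injective hc⟩, ?_⟩
    rintro _ ⟨⟨f, hf, rfl⟩, hfc⟩
    rw [huniq f ⟨hf, by simp [hfc]⟩]

lemma ncard_colorClass_of_iso (φ : G' ≃g G) (ψ : C ≃ D) (col : Sym2 V → C) (d : D) :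
    {e ∈ G'.edgeSet | (ψ ∘ col ∘ Sym2.map φ) e = d}.ncard =
      {e ∈ G.edgeSet | col e = ψ.symm d}.ncard := by
  rw [← Set.ncard_preimage_of_injective_subset_range (Sym2.map.injective φ.injective)]
  · congr 1
    ext e
    simp [φ.map_mem_edgeSet_iff, ← Equiv.eq_symm_apply]
  · intro e _
    exact ⟨Sym2.map φ.symm e, by simp [Sym2.map_map]⟩

end Relabel

lemma exists_fin_of_not_hasFullRainbowMatching {V C : Type*} [Fintype V] [Fintype C]
    (G : SimpleGraph V) [DecidableRel G.Adj] (col : Sym2 V → C) {d : ℕ}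
    (hcol : ∀ k, G.maxDegree + d ≤ {e ∈ G.edgeSet | col e = k}.ncard)
    (hG : ¬ HasFullRainbowMatching G col) :
    ∃ (n k : ℕ) (G' : SimpleGraph (Fin n)) (col' : Sym2 (Fin n) → Fin k),
      (∀ i : Fin k, G'.maxDegree + d ≤ {e ∈ G'.edgeSet | col' e = i}.ncard) ∧
      ¬ HasFullRainbowMatching G' col' := by
  let φ := SimpleGraph.Iso.comap (Fintype.equivFin V).symm G
  let ψ := Fintype.equivFin C
  refine ⟨_, _, _, ψ ∘ col ∘ Sym2.map φ, fun i => ?_, fun h => hG (h.of_iso φ ψ)⟩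
  rw [ncard_colorClass_of_iso]
  -- the two `maxDegree`s are computed with different `DecidableRel` instances
  convert hcol (ψ.symm i) using 2
  convert φ.maxDegree_eq

theorem stmt5 (c : ℕ) :
    ∃ (n k : ℕ) (G : SimpleGraph (Fin n)) (col : Sym2 (Fin n) → Fin k),
      (∀ i : Fin k, G.maxDegree + c ≤ {e ∈ G.edgeSet | col e = i}.ncard) ∧
      ¬ HasFullRainbowMatching G col := by
  classical
  refine exists_fin_of_not_hasFullRainbowMatching (Gm (2 * c + 2)) (colm _) (fun k => ?_)
    Gm.not_hasFullRainbowMatching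
  have hdeg := Gm.maxDegree_le (m := 2 * c + 2)
  have hcls := Gm.le_ncard_colorClass k
  omega
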